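/- (Corollary 1.7(ii)) Suppose 𝒵₀ = {ς_i, −ς_i, 2ς_i, −2ς_i : i = 1, …, d} and that c_𝕜 is rationally independent, i.e. {k ∈ ℤ^d : ⟨c_𝕜, k⟩ = 0} = {0}. Then 𝒵_∞ = ℤ^d \ {0}, and in particular the Hörmander-type condition (Condition 1.1) holds: ℤ^d \ 𝒵_∞ ⊆ A^⊥. -/
import Mathlib


open scoped BigOperators

/-- Euclidean pairing `⟨c, k⟩ = ∑ i, c i * k i` between a real vector and an
integer vector. -/
noncomputable def pairing {d : ℕ} (c : Fin d → ℝ) (k : Fin d → ℤ) : ℝ :=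
  ∑ i, c i * (k i : ℝ)

/-- `A^⊥ = {k ∈ ℤ^d : ⟨c_j, k⟩ = 0 for all j = 1, …, 𝕜}`. -/
def Aperp {d : ℕ} (kk : ℕ) (c : ℕ → Fin d → ℝ) : Set (Fin d → ℤ) :=
  {k | ∀ j : ℕ, 1 ≤ j → j ≤ kk → pairing (c j) k = 0}

/-- The set `𝕃` of sums of exactly `kk - 1` elements of `Z0`. -/
def Lset {d : ℕ} (kk : ℕ) (Z0 : Set (Fin d → ℤ)) : Set (Fin d → ℤ) :=
  {l | ∃ f : Fin (kk - 1) → (Fin d → ℤ), (∀ i, f i ∈ Z0) ∧ l = ∑ i, f i}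

/-- The recursively defined sets `𝒵ₙ`. -/
def Zn {d : ℕ} (kk : ℕ) (ck : Fin d → ℝ) (Z0 : Set (Fin d → ℤ)) :
    ℕ → Set (Fin d → ℤ)
  | 0 => Z0
  | n + 1 =>
      {x | ∃ κ ∈ Zn kk ck Z0 n, ∃ l ∈ Lset kk Z0, x = κ + l ∧ pairing ck x ≠ 0}

/-- `𝒵_∞ = ⋃ n, 𝒵ₙ`. -/
def Zinf {d : ℕ} (kk : ℕ) (ck : Fin d → ℝ) (Z0 : Set (Fin d → ℤ)) :
    Set (Fin d → ℤ) :=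
  ⋃ n : ℕ, Zn kk ck Z0 n

/-- The standard noise set `𝒵₀ = {ς_i, −ς_i, 2ς_i, −2ς_i : i = 1, …, d}`,
where `ς_i` is the `i`-th standard basis vector. -/
def stdZ0 (d : ℕ) : Set (Fin d → ℤ) :=
  {k | ∃ i : Fin d,
    k = Pi.single i 1 ∨ k = -Pi.single i 1 ∨ k = Pi.single i 2 ∨ k = -Pi.single i 2}

def SumsOf {d : ℕ} (m : ℕ) (S : Set (Fin d → ℤ)) : Set (Fin d → ℤ) :=
  {l | ∃ f : Fin m → (Fin d → ℤ), (∀ i, f i ∈ S) ∧ l = ∑ i, f i}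

lemma sumsOf_one {d : ℕ} {S : Set (Fin d → ℤ)} {z : Fin d → ℤ} (hz : z ∈ S) :
    z ∈ SumsOf 1 S := ⟨fun _ => z, fun _ => hz, by simp⟩

lemma sumsOf_succ {d m : ℕ} {S : Set (Fin d → ℤ)} {l z : Fin d → ℤ}
    (hl : l ∈ SumsOf m S) (hz : z ∈ S) : z + l ∈ SumsOf (m + 1) S := by
  obtain ⟨f, hf, rfl⟩ := hl
  exact ⟨Fin.cons z f, fun i => by
    refine Fin.cases ?_ ?_ i <;> simp [hz, hf], by rw [Fin.sum_cons]⟩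

lemma single_mem_stdZ0 {d : ℕ} (i : Fin d) {a : ℤ}
    (ha : a = 1 ∨ a = -1 ∨ a = 2 ∨ a = -2) : Pi.single i a ∈ stdZ0 d := by
  refine ⟨i, ?_⟩
  rcases ha with rfl | rfl | rfl | rfl
  · left; rfl
  · right; left; rw [← Pi.single_neg]
  · right; right; left; rfl
  · right; right; right; rw [← Pi.single_neg]

lemma key_single {d : ℕ} (m : ℕ) (i : Fin d) (ε : ℤ) (hε : ε = 1 ∨ ε = -1) :
    Pi.single i ε ∈ SumsOf (m + 1) (stdZ0 d) ∧
    Pi.single i (2 * ε) ∈ SumsOf (m + 1) (stdZ0 d) := by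
  induction m with
  | zero =>
      constructor
      · exact sumsOf_one (single_mem_stdZ0 i (by omega))
      · exact sumsOf_one (single_mem_stdZ0 i (by omega))
  | succ m ih =>
      constructor
      · have : (Pi.single i ε : Fin d → ℤ) = Pi.single i (-ε) + Pi.single i (2 * ε) := by
          rw [← Pi.single_add]; congr 1; ring
        rw [this]
        exact sumsOf_succ ih.2 (single_mem_stdZ0 i (by omega))
      · have : (Pi.single i (2 * ε) : Fin d → ℤ) = Pi.single i ε + Pi.single i ε := by
          rw [← Pi.single_add]; congr 1; ring
        rw [this]
        exact sumsOf_succ ih.1 (single_mem_stdZ0 i (by omega))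

lemma single_mem_Lset {d kk : ℕ} (hk : 2 ≤ kk) (i : Fin d) {ε : ℤ}
    (hε : ε = 1 ∨ ε = -1) : Pi.single i ε ∈ Lset kk (stdZ0 d) := by
  have h : kk - 1 = (kk - 2) + 1 := by omega
  have : Lset kk (stdZ0 d) = SumsOf (kk - 1) (stdZ0 d) := rfl
  rw [this, h]
  exact (key_single (kk - 2) i ε hε).1

lemma pairing_zero {d : ℕ} (c : Fin d → ℝ) : pairing c 0 = 0 := by
  simp [pairing]

lemma zinf_step {d kk : ℕ} {ck : Fin d → ℝ}
    (hrat : {k : Fin d → ℤ | pairing ck k = 0} = {0})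
    {Z0 : Set (Fin d → ℤ)} {k l : Fin d → ℤ}
    (hkZ : k ∈ Zinf kk ck Z0) (hl : l ∈ Lset kk Z0) (hne : k + l ≠ 0) :
    k + l ∈ Zinf kk ck Z0 := by
  obtain ⟨_, ⟨n, rfl⟩, hn⟩ := hkZ
  refine Set.mem_iUnion.2 ⟨n + 1, k, hn, l, hl, rfl, ?_⟩
  intro hp
  have hmem : (k + l) ∈ {k | pairing ck k = 0} := hp
  rw [hrat] at hmem
  exact hne hmem

lemma mem_zinf_of_ne_zero {d kk : ℕ} (hk : 2 ≤ kk) {ck : Fin d → ℝ}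
    (hrat : {k : Fin d → ℤ | pairing ck k = 0} = {0}) :
    ∀ N : ℕ, ∀ k : Fin d → ℤ, (∑ j, (k j).natAbs) = N → k ≠ 0 →
      k ∈ Zinf kk ck (stdZ0 d) := by
  intro N
  induction N using Nat.strong_induction_on with
  | _ N IH =>
    intro k hsum hne
    obtain ⟨j, hj⟩ : ∃ j, k j ≠ 0 := by
      by_contra h
      push_neg at h
      exact hne (funext h)
    have hjN : 1 ≤ N := by
      rw [← hsum]
      calc 1 ≤ (k j).natAbs := by omega
        _ ≤ _ := Finset.single_le_sum (f := fun j' => (k j').natAbs)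
          (fun _ _ => Nat.zero_le _) (Finset.mem_univ j)
    rcases eq_or_lt_of_le hjN with hN1 | hN2
    · -- base case N = 1 : k = ±ς_j ∈ Z0
      have e2 : (k j).natAbs + ∑ j' ∈ Finset.univ.erase j, (k j').natAbs
          = ∑ j', (k j').natAbs := by
        simpa using Finset.add_sum_erase Finset.univ (fun j' => (k j').natAbs)
          (Finset.mem_univ j)
      have herase : ∑ j' ∈ Finset.univ.erase j, (k j').natAbs = 0 := by omega
      have hzero : ∀ j' , j' ≠ j → k j' = 0 := by
        intro j' hj'
        have := (Finset.sum_eq_zero_iff.1 herase) j'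
          (Finset.mem_erase.2 ⟨hj', Finset.mem_univ j'⟩)
        omega
      have hkj : (k j).natAbs = 1 := by omega
      have hks : k = Pi.single j (k j) := by
        funext j'
        by_cases h : j' = j
        · subst h; simp
        · rw [hzero j' h, Pi.single_eq_of_ne h]
      have : k ∈ stdZ0 d := by
        rw [hks]
        exact single_mem_stdZ0 j (by omega)
      exact Set.mem_iUnion.2 ⟨0, this⟩
    · -- inductive step
      set s : ℤ := if 0 < k j then 1 else -1 with hs
      have hsval : s = 1 ∨ s = -1 := by
        rw [hs]; split <;> simp
      have hsabs : (k j - s).natAbs = (k j).natAbs - 1 := by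
        rw [hs]; split <;> omega
      set k' : Fin d → ℤ := k - Pi.single j s with hk'
      have hk'j : k' j = k j - s := by simp [hk']
      have hk'other : ∀ j', j' ≠ j → k' j' = k j' := by
        intro j' h
        simp [hk', Pi.single_eq_of_ne h]
      have hsum' : ∑ j', (k' j').natAbs = N - 1 := by
        have e1 : (k' j).natAbs + ∑ j' ∈ Finset.univ.erase j, (k' j').natAbs
            = ∑ j', (k' j').natAbs := by
          simpa using Finset.add_sum_erase Finset.univ (fun j' => (k' j').natAbs)
            (Finset.mem_univ j)
        have e2 : (k j).natAbs + ∑ j' ∈ Finset.univ.erase j, (k j').natAbs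
            = ∑ j', (k j').natAbs := by
          simpa using Finset.add_sum_erase Finset.univ (fun j' => (k j').natAbs)
            (Finset.mem_univ j)
        have e3 : ∑ j' ∈ Finset.univ.erase j, (k' j').natAbs
            = ∑ j' ∈ Finset.univ.erase j, (k j').natAbs := by
          refine Finset.sum_congr rfl fun j' hj' => ?_
          rw [hk'other j' (Finset.mem_erase.1 hj').1]
        rw [hk'j] at e1
        omega
      have hk'ne : k' ≠ 0 := by
        intro h
        rw [h] at hsum'
        simp at hsum'
        omega
      have hIH : k' ∈ Zinf kk ck (stdZ0 d) :=
        IH (N - 1) (by omega) k' hsum' hk'ne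
      have hdecomp : k = k' + Pi.single j s := by
        rw [hk']; abel
      rw [hdecomp]
      exact zinf_step hrat hIH (single_mem_Lset hk j hsval) (hdecomp ▸ hne)

lemma zinf_subset_ne_zero {d kk : ℕ} {ck : Fin d → ℝ}
    (hrat : {k : Fin d → ℤ | pairing ck k = 0} = {0}) :
    ∀ k ∈ Zinf kk ck (stdZ0 d), k ≠ 0 := by
  intro k hkZ
  obtain ⟨_, ⟨n, rfl⟩, hn⟩ := hkZ
  cases n with
  | zero =>
    obtain ⟨i, h⟩ := hn
    intro h0
    rcases h with rfl | rfl | rfl | rfl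
    · have := congrFun h0 i; simp at this
    · have := congrFun h0 i; simp at this
    · have := congrFun h0 i; simp at this
    · have := congrFun h0 i; simp at this
  | succ n =>
    obtain ⟨κ, _, l, _, rfl, hp⟩ := hn
    intro h0
    exact hp (h0 ▸ pairing_zero ck)

/-- Corollary 1.7(ii): if `𝒵₀ = {ς_i, −ς_i, 2ς_i, −2ς_i}` and `c_𝕜`
is rationally independent, i.e. `{k ∈ ℤ^d : ⟨c_𝕜, k⟩ = 0} = {0}`, then
`𝒵_∞ = ℤ^d \ {0}` and in particular the Hörmander-type condition
`ℤ^d \ 𝒵_∞ ⊆ A^⊥` holds. -/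
theorem statement4 {d kk : ℕ} (hd : 1 ≤ d) (hk : 2 ≤ kk)
    (c : ℕ → Fin d → ℝ)
    (hrat : {k : Fin d → ℤ | pairing (c kk) k = 0} = {0})
    (Z0 : Set (Fin d → ℤ)) (hZ0 : Z0 = stdZ0 d) :
    Zinf kk (c kk) Z0 = {k : Fin d → ℤ | k ≠ 0} ∧
    ∀ k : Fin d → ℤ, k ∉ Zinf kk (c kk) Z0 → k ∈ Aperp kk c := by
  subst hZ0
  have heq : Zinf kk (c kk) (stdZ0 d) = {k : Fin d → ℤ | k ≠ 0} := by
    apply Set.eq_of_subset_of_subset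
    · intro k hkZ
      exact zinf_subset_ne_zero hrat k hkZ
    · intro k hkne
      exact mem_zinf_of_ne_zero hk hrat _ k rfl hkne
  refine ⟨heq, fun k hk' => ?_⟩
  have : k = 0 := by
    by_contra h
    exact hk' (heq ▸ (h : k ∈ {k : Fin d → ℤ | k ≠ 0}))
  subst this
  intro j _ _
  exact pairing_zero (c j)
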